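/- Let E be a poset and L a complete lattice that is dually continuous. Then every maxitive map v : E → L satisfies, for all g ∈ E, v g = sInf {x : L | ∃ h ∈ E, ∃ s ∈ L, s ≫ v h ∧ x = ⟨h,s⟩ g}, i.e. v is the pointwise infimum of the maps ⟨h,s⟩ over all h ∈ E and s ∈ L with s way above v h. -/

import Mathlib

/-- `y` is way above `x`. -/
def WayAbove {α : Type*} [Preorder α] (y x : α) : Prop :=
  ∀ D : Set α, D.Nonempty → DirectedOn (· ≥ ·) D → ∀ d : α, IsGLB D d → d ≤ x → ∃ z ∈ D, z ≤ y

/-- A poset is dually continuous. -/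
def DuallyContinuous (α : Type*) [Preorder α] : Prop :=
  ∀ x : α, {y | WayAbove y x}.Nonempty ∧ DirectedOn (· ≥ ·) {y | WayAbove y x} ∧
    IsGLB {y | WayAbove y x} x

/-- A map `v : E → L` between posets is maxitive. -/
def Maxitive {E L : Type*} [Preorder E] [Preorder L] (v : E → L) : Prop :=
  ∀ S : Set E, S.Nonempty → S.Finite → ∀ b : E, IsLUB S b → IsLUB (v '' S) (v b)

open Classical in
/-- The elementary map `⟨h,s⟩`, equal to `s` on `{g | g ≤ h}` and to `⊤` elsewhere. -/
noncomputable def bracket {E L : Type*} [Preorder E] [Preorder L] [Top L]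
    (h : E) (s : L) : E → L :=
  fun g => if g ≤ h then s else ⊤

/-! Maxitivity on pairs `{a, b}` with `a ≤ b` makes `v` monotone, and `s ≫ x` implies `x ≤ s`,
so `v ≤ ⟨h,s⟩` for every admissible pair. Conversely the pairs `⟨g,s⟩` with `s ≫ v g` already
have infimum `v g` at `g`, since `v g` is the infimum of the elements way above it. -/

theorem Maxitive.monotone {E L : Type*} [Preorder E] [Preorder L] {v : E → L}
    (hv : Maxitive v) : Monotone v := by
  intro a b hab
  have hpair : IsLUB ({a, b} : Set E) b :=
    ⟨by rintro x (rfl | rfl); exacts [hab, le_rfl], fun _ hx => hx (Set.mem_insert_of_mem a rfl)⟩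
  exact (hv {a, b} (Set.insert_nonempty a {b}) (Set.toFinite _) b hpair).1
    (Set.mem_image_of_mem v (Set.mem_insert a {b}))

theorem WayAbove.le {α : Type*} [Preorder α] {y x : α} (h : WayAbove y x) : x ≤ y := by
  obtain ⟨z, rfl, hzy⟩ := h {x} (Set.singleton_nonempty x) (directedOn_singleton x) x
    isGLB_singleton le_rfl
  exact hzy

theorem bracket_self {E L : Type*} [Preorder E] [Preorder L] [Top L] (h : E) (s : L) :
    bracket h s h = s :=
  if_pos le_rfl

theorem Monotone.le_bracket {E L : Type*} [Preorder E] [Preorder L] [OrderTop L] {v : E → L}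
    (hv : Monotone v) {h : E} {s : L} (hs : v h ≤ s) (g : E) : v g ≤ bracket h s g := by
  unfold bracket
  split_ifs with hgh
  · exact (hv hgh).trans hs
  · exact le_top

/-- Every maxitive map into a dually continuous complete lattice is the pointwise infimum
of the elementary maps `⟨h,s⟩` with `s` way above `v h`. -/
theorem maxitive_eq_iInf_brackets {E L : Type*} [PartialOrder E] [CompleteLattice L]
    (hL : DuallyContinuous L) (v : E → L) (hv : Maxitive v) (g : E) :
    v g = sInf {x : L | ∃ h : E, ∃ s : L, WayAbove s (v h) ∧ x = bracket h s g} := by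
  apply le_antisymm
  · refine le_sInf ?_
    rintro _ ⟨h, s, hs, rfl⟩
    exact hv.monotone.le_bracket hs.le g
  · refine (hL (v g)).2.2.2 fun s hs => sInf_le ?_
    exact ⟨g, s, hs, (bracket_self g s).symm⟩
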